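/- For all stochastic matrices p and q on a nonempty finite set S, Doeblin's ergodicity coefficient satisfies (1 − α(p·q)) ≤ (1 − α(p))·(1 − α(q)), where p·q denotes the matrix product. -/

import Mathlib

/-- A stochastic matrix on a finite set `S`: nonnegative entries, each row sums to 1. -/
def IsStochastic {S : Type*} [Fintype S] (p : Matrix S S ℝ) : Prop :=
  (∀ i j, 0 ≤ p i j) ∧ ∀ i, ∑ j, p i j = 1

/-- A matrix all of whose rows are identical. -/
def IsConstRow {S : Type*} (E : Matrix S S ℝ) : Prop :=
  ∀ i i' j, E i j = E i' j

/-- Doeblin's ergodicity coefficient `α(p) = Σ_j min_i p(i,j)`. -/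
noncomputable def doeblin {S : Type*} [Fintype S] [Nonempty S] (p : Matrix S S ℝ) : ℝ :=
  ∑ j, Finset.univ.inf' Finset.univ_nonempty fun i => p i j

/-!
Write `n k = min_i p(i,k)` and `m j = min_i q(i,j)`. Splitting `q(k,j) = m j + (q(k,j) - m j)` with
a nonnegative second summand and using that the rows of `p` sum to 1,
`(p q)(i,j) ≥ m j + Σ_k n k (q(k,j) - m j)` for every `i`. Summing the minimum over `i` of the left
side over `j`, and using that each `Σ_j (q(k,j) - m j) = 1 - α(q)`, gives
`α(p q) ≥ α(q) + α(p) (1 - α(q))`, which rearranges to the claim.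
-/

open Finset

section ColMin

variable {ι κ : Type*} [Fintype ι] [Nonempty ι]

noncomputable def colMin (p : Matrix ι κ ℝ) (j : κ) : ℝ :=
  univ.inf' univ_nonempty fun i => p i j

theorem colMin_le (p : Matrix ι κ ℝ) (i : ι) (j : κ) : colMin p j ≤ p i j :=
  inf'_le _ (mem_univ i)

theorem le_colMin {p : Matrix ι κ ℝ} {j : κ} {a : ℝ} (h : ∀ i, a ≤ p i j) : a ≤ colMin p j :=
  le_inf' _ _ fun i _ => h i

end ColMin

theorem doeblin_eq_sum_colMin {S : Type*} [Fintype S] [Nonempty S] (p : Matrix S S ℝ) :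
    doeblin p = ∑ j, colMin p j :=
  rfl

theorem sum_sub_colMin_eq_one_sub_doeblin {S : Type*} [Fintype S] [Nonempty S]
    {q : Matrix S S ℝ} (hq : ∀ i, ∑ j, q i j = 1) (k : S) :
    ∑ j, (q k j - colMin q j) = 1 - doeblin q := by
  rw [sum_sub_distrib, hq k, doeblin_eq_sum_colMin]

theorem colMin_add_sum_colMin_mul_le_mul_apply {ι K J : Type*} [Fintype ι] [Nonempty ι]
    [Fintype K] [Nonempty K] {p : Matrix ι K ℝ} (hp : ∀ i, ∑ k, p i k = 1)
    (q : Matrix K J ℝ) (i : ι) (j : J) :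
    colMin q j + ∑ k, colMin p k * (q k j - colMin q j) ≤ (p * q) i j :=
  calc colMin q j + ∑ k, colMin p k * (q k j - colMin q j)
      ≤ colMin q j + ∑ k, p i k * (q k j - colMin q j) := by
        gcongr with k
        · exact sub_nonneg.2 (colMin_le q k j)
        · exact colMin_le p i k
    _ = ∑ k, (p i k * colMin q j + p i k * (q k j - colMin q j)) := by
        rw [sum_add_distrib, ← sum_mul, hp i, one_mul]
    _ = (p * q) i j := by
        rw [Matrix.mul_apply]
        exact sum_congr rfl fun k _ => by ring

theorem doeblin_add_doeblin_mul_one_sub_le_doeblin_mul {S : Type*} [Fintype S] [Nonempty S]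
    {p q : Matrix S S ℝ} (hp : ∀ i, ∑ k, p i k = 1) (hq : ∀ i, ∑ j, q i j = 1) :
    doeblin q + doeblin p * (1 - doeblin q) ≤ doeblin (p * q) :=
  calc doeblin q + doeblin p * (1 - doeblin q)
      = ∑ j, (colMin q j + ∑ k, colMin p k * (q k j - colMin q j)) := by
        rw [sum_add_distrib, sum_comm, doeblin_eq_sum_colMin p, sum_mul, ← doeblin_eq_sum_colMin]
        simp only [← mul_sum, sum_sub_colMin_eq_one_sub_doeblin hq]
    _ ≤ doeblin (p * q) :=
        sum_le_sum fun j _ => le_colMin fun i => colMin_add_sum_colMin_mul_le_mul_apply hp q i j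

theorem doeblin_submultiplicative {S : Type*} [Fintype S] [Nonempty S]
    (p q : Matrix S S ℝ) (hp : IsStochastic p) (hq : IsStochastic q) :
    1 - doeblin (p * q) ≤ (1 - doeblin p) * (1 - doeblin q) := by
  have := doeblin_add_doeblin_mul_one_sub_le_doeblin_mul hp.2 hq.2
  linarith
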